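/- arXiv:2201.10136 — 2 statements merged into one kernel-verified Lean document; each statement's English description precedes it below -/
import Mathlib

section
/- Let C be an algebraically closed complete nonarchimedean field extension of Q_p, let c ∈ O_C with |c| ≤ 1, and let A be an n×n matrix over O_C. Then the products P_N = ∏_{i=0}^{N} (i·c·I + A) (taken in increasing order of i) tend to the zero matrix as N → ∞ if and only if for every eigenvalue α of A, the scalar products ∏_{i=0}^{N} (i·c + α) tend to 0. -/
open Filter Polynomial Finset

section Aux

variable {C : Type*} [NormedField C]

lemma ult_nat_norm_le_one (hult : ∀ x y : C, ‖x + y‖ ≤ max ‖x‖ ‖y‖) (k : ℕ) :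
    ‖(k : C)‖ ≤ 1 := by
  induction k with
  | zero => simp
  | succ m ih =>
      push_cast
      refine (hult m 1).trans ?_
      simp [ih]

lemma ult_norm_sum_le (hult : ∀ x y : C, ‖x + y‖ ≤ max ‖x‖ ‖y‖)
    {ι : Type*} (s : Finset ι) (f : ι → C) {B : ℝ} (hB : 0 ≤ B)
    (h : ∀ i ∈ s, ‖f i‖ ≤ B) : ‖∑ i ∈ s, f i‖ ≤ B := by
  classical
  induction s using Finset.induction with
  | empty => simpa using hB
  | insert _ _ hx ih =>
      rename_i a s
      rw [Finset.sum_insert hx]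
      refine (hult _ _).trans ?_
      exact max_le (h a (Finset.mem_insert_self a s))
        (ih fun i hi => h i (Finset.mem_insert_of_mem hi))

/-- Core analytic lemma: if the full products tend to zero, then products over subsets
of `range (N+1)` omitting at most `t` indices tend to zero uniformly. -/
lemma core_lemma (hult : ∀ x y : C, ‖x + y‖ ≤ max ‖x‖ ‖y‖)
    {p : ℕ} (hp0 : 0 < p) (hp : ‖(p : C)‖ < 1) (c α : C)
    (hb : ∀ i : ℕ, ‖(i : C) * c + α‖ ≤ 1) (hc : ‖c‖ ≤ 1) (t : ℕ)
    (hfull : Tendsto (fun N : ℕ => ∏ i ∈ Finset.range (N + 1), ((i : C) * c + α))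
      atTop (nhds 0)) :
    ∀ ε : ℝ, 0 < ε → ∃ N0 : ℕ, ∀ N, N0 ≤ N → ∀ T ⊆ Finset.range (N + 1),
      N + 1 ≤ T.card + t → ‖∏ i ∈ T, ((i : C) * c + α)‖ < ε := by
  intro ε hε
  set b : ℕ → C := fun i => (i : C) * c + α with hbdef
  set δ : ℝ := min ε (1 / 2) with hδdef
  have hδ0 : 0 < δ := lt_min hε (by norm_num)
  have hδ1 : δ < 1 := lt_of_le_of_lt (min_le_right _ _) (by norm_num)
  have hδε : δ ≤ ε := min_le_left _ _
  by_cases hex : ∃ i1 : ℕ, ‖b i1‖ < δ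
  · obtain ⟨i1, hi1⟩ := hex
    set ρ : ℝ := max ‖b i1‖ ‖(p : C)‖ with hρdef
    have hρ0 : 0 ≤ ρ := le_trans (norm_nonneg _) (le_max_left _ _)
    have hρ1 : ρ < 1 := max_lt (lt_of_lt_of_le hi1 (le_of_lt hδ1)) hp
    -- choose m0 with ρ^m0 < δ
    obtain ⟨m0, hm0⟩ : ∃ m0 : ℕ, ρ ^ m0 < δ := by
      have := tendsto_pow_atTop_nhds_zero_of_lt_one hρ0 hρ1
      have := (this.eventually (gt_mem_nhds hδ0)).exists
      exact this
    set M : ℕ := t + m0 with hMdef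
    refine ⟨i1 + p * M, fun N hN T hT hcard => ?_⟩
    -- the arithmetic progression
    set R : Finset ℕ := (Finset.range M).image (fun k => i1 + p * k) with hRdef
    have hRsub : R ⊆ Finset.range (N + 1) := by
      intro x hx
      simp only [hRdef, Finset.mem_image, Finset.mem_range] at hx
      obtain ⟨k, hk, rfl⟩ := hx
      have : i1 + p * k ≤ i1 + p * M := by
        have := Nat.mul_le_mul_left p (le_of_lt hk)
        omega
      exact Finset.mem_range.2 (by omega)
    have hRcard : R.card = M := by
      rw [hRdef, Finset.card_image_of_injective _ (fun a b hab => Nat.eq_of_mul_eq_mul_left hp0 (Nat.add_left_cancel hab)),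
        Finset.card_range]
    -- each element of R has small norm
    have hRnorm : ∀ x ∈ R, ‖b x‖ ≤ ρ := by
      intro x hx
      simp only [hRdef, Finset.mem_image, Finset.mem_range] at hx
      obtain ⟨k, _, rfl⟩ := hx
      have : b (i1 + p * k) = b i1 + ((p : C) * (k : C)) * c := by
        simp only [hbdef]; push_cast; ring
      rw [this]
      refine (hult _ _).trans (max_le (le_max_left _ _) ?_)
      refine le_trans ?_ (le_max_right ‖b i1‖ _)
      rw [norm_mul, norm_mul]
      calc ‖(p : C)‖ * ‖(k : C)‖ * ‖c‖ ≤ ‖(p:C)‖ * 1 * 1 := by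
            refine mul_le_mul (mul_le_mul le_rfl (ult_nat_norm_le_one hult k)
              (norm_nonneg _) (norm_nonneg _)) hc (norm_nonneg _) ?_
            positivity
        _ = ‖(p : C)‖ := by ring
    -- card of R ∩ T
    have hmiss : (R \ T).card ≤ t := by
      have h1 : R \ T ⊆ Finset.range (N + 1) \ T := by
        exact Finset.sdiff_subset_sdiff hRsub le_rfl
      have h2 : (Finset.range (N + 1) \ T).card = (N + 1) - T.card := by
        rw [Finset.card_sdiff_of_subset hT, Finset.card_range]
      have := Finset.card_le_card h1
      omega
    have hRT : m0 ≤ (R ∩ T).card := by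
      have h3 : (R ∩ T).card + (R \ T).card = R.card :=
        Finset.card_inter_add_card_sdiff R T
      omega
    -- final bound
    have key : ‖∏ i ∈ T, b i‖ ≤ ρ ^ m0 := by
      rw [norm_prod]
      have hsplit : T = (R ∩ T) ∪ (T \ R) := by
        ext x; simp only [Finset.mem_union, Finset.mem_inter, Finset.mem_sdiff]; tauto
      have hdisj : Disjoint (R ∩ T) (T \ R) := by
        refine Finset.disjoint_left.2 ?_
        intro x hx hx2
        simp only [Finset.mem_inter, Finset.mem_sdiff] at hx hx2
        exact hx2.2 hx.1
      rw [hsplit, Finset.prod_union hdisj]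
      have h1 : ∏ i ∈ R ∩ T, ‖b i‖ ≤ ρ ^ m0 := by
        calc ∏ i ∈ R ∩ T, ‖b i‖ ≤ ∏ _i ∈ R ∩ T, ρ := by
              refine Finset.prod_le_prod (fun i _ => norm_nonneg _) ?_
              intro i hi
              exact hRnorm i (Finset.mem_inter.1 hi).1
          _ = ρ ^ (R ∩ T).card := by rw [Finset.prod_const]
          _ ≤ ρ ^ m0 := pow_le_pow_of_le_one hρ0 (le_of_lt hρ1) hRT
      have h2 : ∏ i ∈ T \ R, ‖b i‖ ≤ 1 := by
        refine Finset.prod_le_one (fun i _ => norm_nonneg _) (fun i _ => hb i)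
      calc (∏ i ∈ R ∩ T, ‖b i‖) * ∏ i ∈ T \ R, ‖b i‖
          ≤ ρ ^ m0 * 1 := by
            refine mul_le_mul h1 h2 (Finset.prod_nonneg fun i _ => norm_nonneg _) ?_
            positivity
        _ = ρ ^ m0 := by ring
    exact lt_of_le_of_lt key (lt_of_lt_of_le hm0 hδε)
  · push_neg at hex
    -- all factors have norm ≥ δ
    have hlow : ∀ i : ℕ, δ ≤ ‖b i‖ := hex
    have hev : ∀ᶠ N in atTop,
        ‖∏ i ∈ Finset.range (N + 1), b i‖ < δ ^ (t + 1) := by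
      have := NormedAddCommGroup.tendsto_nhds_zero.1 hfull (δ ^ (t + 1)) (by positivity)
      exact this
    obtain ⟨N0, hN0⟩ := eventually_atTop.1 hev
    refine ⟨N0, fun N hN T hT hcard => ?_⟩
    have hfullN := hN0 N hN
    have hSsub : Finset.range (N + 1) \ T ⊆ Finset.range (N + 1) := Finset.sdiff_subset
    have hScard : (Finset.range (N + 1) \ T).card ≤ t := by
      rw [Finset.card_sdiff_of_subset hT, Finset.card_range]; omega
    have hfact : (∏ i ∈ Finset.range (N + 1) \ T, b i) * ∏ i ∈ T, b i
        = ∏ i ∈ Finset.range (N + 1), b i := Finset.prod_sdiff hT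
    have hSnorm : δ ^ t ≤ ‖∏ i ∈ Finset.range (N + 1) \ T, b i‖ := by
      rw [norm_prod]
      calc δ ^ t ≤ δ ^ (Finset.range (N + 1) \ T).card :=
            pow_le_pow_of_le_one (le_of_lt hδ0) (le_of_lt hδ1) hScard
        _ = ∏ _i ∈ Finset.range (N + 1) \ T, δ := by rw [Finset.prod_const]
        _ ≤ ∏ i ∈ Finset.range (N + 1) \ T, ‖b i‖ :=
            Finset.prod_le_prod (fun _ _ => le_of_lt hδ0) (fun i _ => hlow i)
    have hδt : 0 < δ ^ t := by positivity
    have : ‖∏ i ∈ T, b i‖ * δ ^ t < δ ^ (t + 1) := by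
      calc ‖∏ i ∈ T, b i‖ * δ ^ t ≤ ‖∏ i ∈ T, b i‖ * ‖∏ i ∈ Finset.range (N + 1) \ T, b i‖ := by
            refine mul_le_mul le_rfl hSnorm (le_of_lt hδt) (norm_nonneg _)
        _ = ‖∏ i ∈ Finset.range (N + 1), b i‖ := by rw [← norm_mul, mul_comm, hfact]
        _ < δ ^ (t + 1) := hfullN
    have hlt : ‖∏ i ∈ T, b i‖ < δ := by
      have h5 : δ ^ (t + 1) = δ * δ ^ t := by ring
      rw [h5] at this
      exact lt_of_mul_lt_mul_right this (le_of_lt hδt)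
    exact lt_of_lt_of_le hlt hδε


lemma exists_eigenvector {n : ℕ} (A : Matrix (Fin n) (Fin n) C) {α : C}
    (hroot : (Matrix.charpoly A).IsRoot α) :
    ∃ v : Fin n → C, v ≠ 0 ∧ A.mulVec v = α • v := by
  have hdet : (α • (1 : Matrix (Fin n) (Fin n) C) - A).det = 0 := by
    have h2 : Polynomial.eval α (Matrix.charpoly A) = 0 := hroot
    rw [Matrix.charpoly] at h2
    have h3 : Polynomial.eval α (Matrix.charmatrix A).det
        = ((Matrix.charmatrix A).map (Polynomial.evalRingHom α)).det := by
      have := (Polynomial.evalRingHom α).map_det (Matrix.charmatrix A)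
      simpa using this
    have h4 : (Matrix.charmatrix A).map (Polynomial.evalRingHom α)
        = α • (1 : Matrix (Fin n) (Fin n) C) - A := by
      ext i j
      by_cases hij : i = j
      · subst hij
        simp [Matrix.charmatrix_apply_eq, Matrix.map_apply, Matrix.one_apply]
      · simp [Matrix.charmatrix_apply_ne _ _ _ hij, Matrix.map_apply,
          Matrix.one_apply_ne hij]
    rw [h3, h4] at h2
    exact h2
  obtain ⟨v, hv0, hv⟩ := (Matrix.exists_mulVec_eq_zero_iff).2 hdet
  refine ⟨v, hv0, ?_⟩
  rw [Matrix.sub_mulVec, Matrix.smul_mulVec, Matrix.one_mulVec, sub_eq_zero] at hv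
  exact hv.symm

lemma root_norm_le (hult : ∀ x y : C, ‖x + y‖ ≤ max ‖x‖ ‖y‖)
    {n : ℕ} {A : Matrix (Fin n) (Fin n) C} (hA : ∀ i j, ‖A i j‖ ≤ 1) {α : C}
    (hroot : (Matrix.charpoly A).IsRoot α) : ‖α‖ ≤ 1 := by
  obtain ⟨v, hv0, hv⟩ := exists_eigenvector A hroot
  obtain ⟨l1, hl1⟩ := Function.ne_iff.1 hv0
  have hne : (Finset.univ : Finset (Fin n)).Nonempty := ⟨l1, Finset.mem_univ l1⟩
  obtain ⟨l0, -, hl0⟩ := Finset.exists_max_image Finset.univ (fun l => ‖v l‖) hne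
  have hvl0 : 0 < ‖v l0‖ :=
    lt_of_lt_of_le (norm_pos_iff.2 (by simpa using hl1)) (hl0 l1 (Finset.mem_univ l1))
  have heq : α * v l0 = ∑ l, A l0 l * v l := by
    have := congrFun hv l0
    simpa [Matrix.mulVec, dotProduct, Pi.smul_apply, smul_eq_mul] using this.symm
  have hle : ‖α * v l0‖ ≤ ‖v l0‖ := by
    rw [heq]
    refine ult_norm_sum_le hult _ _ (norm_nonneg _) ?_
    intro l _
    rw [norm_mul]
    calc ‖A l0 l‖ * ‖v l‖ ≤ 1 * ‖v l0‖ :=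
          mul_le_mul (hA l0 l) (hl0 l (Finset.mem_univ l)) (norm_nonneg _) zero_le_one
      _ = ‖v l0‖ := one_mul _
  rw [norm_mul] at hle
  nlinarith [hle, hvl0]

lemma aeval_mulVec {n : ℕ} {A : Matrix (Fin n) (Fin n) C} {v : Fin n → C} {α : C}
    (hv : A.mulVec v = α • v) (q : C[X]) :
    (Polynomial.aeval A q).mulVec v = q.eval α • v := by
  have hpow : ∀ m : ℕ, (A ^ m).mulVec v = α ^ m • v := by
    intro m
    induction m with
    | zero => simp [Matrix.one_mulVec]
    | succ k ih =>
        rw [pow_succ, ← Matrix.mulVec_mulVec, hv, Matrix.mulVec_smul, ih, smul_smul, pow_succ]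
        ring_nf
  induction q using Polynomial.induction_on' with
  | add r s hr hs => rw [map_add, Matrix.add_mulVec, hr, hs, eval_add, add_smul]
  | monomial k a =>
      rw [aeval_monomial, eval_monomial]
      rw [Algebra.algebraMap_eq_smul_one, smul_mul_assoc, one_mul,
        Matrix.smul_mulVec, hpow, smul_smul]


/-- The matrix product equals the evaluation of the scalar polynomial. -/
lemma listprod_eq_aeval {n : ℕ} (A : Matrix (Fin n) (Fin n) C) (c : C) (m : ℕ) :
    ((List.range m).map (fun i : ℕ => ((i : C) * c) • (1 : Matrix (Fin n) (Fin n) C) + A)).prod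
      = Polynomial.aeval A (∏ i ∈ Finset.range m, (Polynomial.C ((i : C) * c) + X)) := by
  induction m with
  | zero => simp
  | succ k ih =>
      rw [List.range_succ, List.map_append, List.prod_append, ih, Finset.prod_range_succ,
        map_mul, map_add, aeval_C, aeval_X, Algebra.algebraMap_eq_smul_one]
      simp

lemma coeff_taylor_eq_zero_of_pow_dvd {a : C} {m t : ℕ} {f : C[X]}
    (h : (X - Polynomial.C a) ^ m ∣ f) (ht : t < m) :
    ((Polynomial.taylor a) f).coeff t = 0 := by
  obtain ⟨g, rfl⟩ := h
  rw [taylor_apply, mul_comp, pow_comp, sub_comp, X_comp, C_comp]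
  have h1 : (X + Polynomial.C a - Polynomial.C a : C[X]) = X := by ring
  rw [h1]
  exact Polynomial.X_pow_dvd_iff.1 ⟨g.comp (X + Polynomial.C a), rfl⟩ t ht

lemma taylor_prod_X_add {a c : C} (m : ℕ) :
    (Polynomial.taylor a) (∏ i ∈ Finset.range m, (Polynomial.C ((i : C) * c) + X))
      = ∏ i ∈ Finset.range m, (X + Polynomial.C ((i : C) * c + a)) := by
  rw [taylor_apply, Polynomial.prod_comp]
  refine Finset.prod_congr rfl fun i _ => ?_
  rw [add_comp, C_comp, X_comp, map_add]
  ring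


/-- Backward key: coefficients of `q_N %ₘ χ` tend to zero. -/
lemma coeff_mod_tendsto_zero (hult : ∀ x y : C, ‖x + y‖ ≤ max ‖x‖ ‖y‖)
    {p : ℕ} (hp0 : 0 < p) (hp : ‖(p : C)‖ < 1)
    {n : ℕ} (hn : 0 < n) (χ : C[X]) (hmon : χ.Monic) (hdeg : χ.natDegree = n)
    (hcard : Multiset.card χ.roots = n)
    (c : C) (hc : ‖c‖ ≤ 1)
    (hroots : ∀ a ∈ χ.roots, ‖a‖ ≤ 1)
    (hconv : ∀ a ∈ χ.roots, Tendsto (fun N : ℕ => ∏ i ∈ Finset.range (N + 1), ((i : C) * c + a))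
      atTop (nhds 0))
    (d : ℕ) :
    Tendsto (fun N : ℕ =>
      ((∏ i ∈ Finset.range (N + 1), (Polynomial.C ((i : C) * c) + X)) %ₘ χ).coeff d)
      atTop (nhds 0) := by
  classical
  set q : ℕ → C[X] := fun N => ∏ i ∈ Finset.range (N + 1), (Polynomial.C ((i : C) * c) + X)
    with hqdef
  set r : ℕ → C[X] := fun N => q N %ₘ χ with hrdef
  have hχ0 : χ ≠ 0 := hmon.ne_zero
  have hχdeg : χ.degree = (n : ℕ∞) := by
    rw [degree_eq_natDegree hχ0, hdeg]; rfl
  have hrdeg : ∀ N, (r N).natDegree < n := by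
    intro N
    by_cases h0 : r N = 0
    · rw [h0]; simpa using hn
    · have h := Polynomial.degree_modByMonic_lt (q N) hmon
      rw [hχdeg] at h
      exact (natDegree_lt_iff_degree_lt h0).2 (by exact_mod_cast h)
  set F : Finset C := χ.roots.toFinset with hFdef
  -- index type
  let ι : Type _ := Σ a : {x // x ∈ F}, Fin (χ.roots.count a.1)
  -- the linear map
  let φ : (Fin n → C) →ₗ[C] C[X] :=
    ∑ e : Fin n, (Polynomial.monomial (R := C) e.1).comp (LinearMap.proj e)
  have hφapp : ∀ w : Fin n → C, φ w = ∑ e : Fin n, Polynomial.monomial e.1 (w e) := by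
    intro w
    simp [φ, LinearMap.sum_apply]
  let L : (Fin n → C) →ₗ[C] (ι → C) :=
    LinearMap.pi (fun i : ι => (Polynomial.lcoeff C i.2.1) ∘ₗ ((Polynomial.taylor i.1.1) ∘ₗ φ))
  have hLapp : ∀ (w : Fin n → C) (i : ι), L w i =
      ((Polynomial.taylor i.1.1) (∑ e : Fin n, Polynomial.monomial e.1 (w e))).coeff i.2.1 := by
    intro w i
    simp [L, LinearMap.pi_apply, hφapp]
  -- injectivity
  have hker : LinearMap.ker L = ⊥ := by
    rw [LinearMap.ker_eq_bot']
    intro w hw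
    set rw0 : C[X] := ∑ e : Fin n, Polynomial.monomial e.1 (w e) with hrw0
    have hcoeff : ∀ e : Fin n, rw0.coeff e.1 = w e := by
      intro e
      rw [hrw0, Polynomial.finset_sum_coeff]
      rw [Finset.sum_eq_single e]
      · simp
      · intro e' _ hne
        rw [Polynomial.coeff_monomial, if_neg (by simpa [Fin.val_injective.eq_iff] using hne)]
      · intro h; exact absurd (Finset.mem_univ e) h
    have hrw00 : rw0 = 0 := by
      by_contra hr0
      have hmult : ∀ a ∈ F, χ.roots.count a ≤ rootMultiplicity a rw0 := by
        intro a ha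
        rw [Polynomial.le_rootMultiplicity_iff hr0]
        -- taylor a rw0 has vanishing low coefficients
        have hcz : ∀ t < χ.roots.count a, ((Polynomial.taylor a) rw0).coeff t = 0 := by
          intro t ht
          have h5 := congrFun hw (⟨⟨a, ha⟩, ⟨t, ht⟩⟩ : ι)
          rw [hLapp w (⟨⟨a, ha⟩, ⟨t, ht⟩⟩ : ι)] at h5
          rw [hrw0]
          simpa using h5
        obtain ⟨g, hg⟩ := Polynomial.X_pow_dvd_iff.2 hcz
        refine ⟨g.comp (X + Polynomial.C (-a)), ?_⟩
        have h1 : rw0 = (Polynomial.taylor (-a)) ((Polynomial.taylor a) rw0) := by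
          rw [Polynomial.taylor_taylor]
          simp
        rw [h1, hg, taylor_apply, mul_comp, pow_comp, X_comp]
        congr 1
        rw [Polynomial.C_neg]
        ring
      have hle : χ.roots ≤ rw0.roots := by
        rw [Multiset.le_iff_count]
        intro a
        by_cases ha : a ∈ F
        · rw [Polynomial.count_roots rw0]
          exact hmult a ha
        · have : a ∉ χ.roots := fun hmem => ha (Multiset.mem_toFinset.2 hmem)
          simp [Multiset.count_eq_zero_of_notMem this]
      have h2 : n ≤ Multiset.card rw0.roots := hcard ▸ Multiset.card_le_card hle
      have h3 : Multiset.card rw0.roots ≤ rw0.natDegree := Polynomial.card_roots' rw0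
      have h4 : rw0.natDegree < n := by
        have : rw0.natDegree ≤ n - 1 := by
          refine Polynomial.natDegree_sum_le_of_forall_le _ _ ?_
          intro e _
          refine (Polynomial.natDegree_monomial_le _).trans ?_
          omega
        omega
      omega
    funext e
    rw [← hcoeff e, hrw00]
    simp
  obtain ⟨g, hg⟩ := L.exists_leftInverse_of_injective hker
  -- coefficient vectors
  set wN : ℕ → (Fin n → C) := fun N e => (r N).coeff e.1 with hwN
  have hφ : ∀ N, (∑ e : Fin n, Polynomial.monomial e.1 (wN N e)) = r N := by
    intro N
    conv_rhs => rw [(r N).as_sum_range' n (hrdeg N)]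
    rw [Fin.sum_univ_eq_sum_range (fun i => Polynomial.monomial i ((r N).coeff i)) n]
  -- identification of the functionals on q N
  have hLq : ∀ (i : ι) (N : ℕ), L (wN N) i = ((Polynomial.taylor i.1.1) (q N)).coeff i.2.1 := by
    rintro ⟨⟨a, ha⟩, t⟩ N
    rw [hLapp, hφ]
    have hqsplit : q N = r N + χ * (q N /ₘ χ) := (Polynomial.modByMonic_add_div (q N) χ).symm
    rw [hqsplit, map_add, Polynomial.coeff_add]
    have hz : ((Polynomial.taylor a) (χ * (q N /ₘ χ))).coeff t.1 = 0 := by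
      refine coeff_taylor_eq_zero_of_pow_dvd (m := χ.roots.count a) ?_ t.isLt
      have : (X - Polynomial.C a) ^ χ.roots.count a ∣ χ := by
        rw [Polynomial.count_roots]
        exact Polynomial.pow_rootMultiplicity_dvd χ a
      exact this.mul_right _
    rw [hz, add_zero]
  -- convergence of the functionals
  have hLto : ∀ i : ι, Tendsto (fun N => L (wN N) i) atTop (nhds 0) := by
    rintro ⟨⟨a, ha⟩, t⟩
    have haroot : a ∈ χ.roots := Multiset.mem_toFinset.1 ha
    have htn : (t : ℕ) < n := by
      have h1 : χ.roots.count a ≤ Multiset.card χ.roots := Multiset.count_le_card a _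
      have h2 : (t : ℕ) < χ.roots.count a := t.isLt
      omega
    have hb : ∀ i : ℕ, ‖(i : C) * c + a‖ ≤ 1 := by
      intro i
      refine (hult _ _).trans (max_le ?_ (hroots a haroot))
      rw [norm_mul]
      calc ‖(i : C)‖ * ‖c‖ ≤ 1 * 1 :=
            mul_le_mul (ult_nat_norm_le_one hult i) hc (norm_nonneg _) zero_le_one
        _ = 1 := one_mul 1
    rw [NormedAddCommGroup.tendsto_nhds_zero]
    intro ε hε
    obtain ⟨N0, hN0⟩ := core_lemma hult hp0 hp c a hb hc t.1 (hconv a haroot) (ε / 2)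
      (by positivity)
    rw [eventually_atTop]
    refine ⟨max N0 t.1, fun N hN => ?_⟩
    have hNt : t.1 ≤ N := le_trans (le_max_right _ _) hN
    have hNN0 : N0 ≤ N := le_trans (le_max_left _ _) hN
    have hcard2 : (t : ℕ) ≤ (Finset.range (N + 1)).card := by
      rw [Finset.card_range]; omega
    have hcoeff : L (wN N) ⟨⟨a, ha⟩, t⟩ =
        ∑ T ∈ (Finset.range (N + 1)).powersetCard (N + 1 - t.1),
          ∏ i ∈ T, ((i : C) * c + a) := by
      rw [hLq, taylor_prod_X_add, Finset.prod_X_add_C_coeff _ _ hcard2, Finset.card_range]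
    rw [hcoeff]
    have : ‖∑ T ∈ (Finset.range (N + 1)).powersetCard (N + 1 - t.1),
        ∏ i ∈ T, ((i : C) * c + a)‖ ≤ ε / 2 := by
      refine ult_norm_sum_le hult _ _ (by positivity) ?_
      intro T hT
      rw [Finset.mem_powersetCard] at hT
      refine le_of_lt (hN0 N hNN0 T hT.1 ?_)
      omega
    linarith
  -- conclusion
  by_cases hd : d < n
  · set E : ι → (ι → C) := fun i j => if i = j then 1 else 0 with hE
    have hrec : ∀ N, (r N).coeff d = ∑ i : ι, (L (wN N) i) * g (E i) ⟨d, hd⟩ := by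
      intro N
      have h1 : wN N = g (L (wN N)) := by
        have := congrFun (congrArg DFunLike.coe hg) (wN N)
        simpa using this.symm
      have h2 : L (wN N) = ∑ i : ι, (L (wN N) i) • E i := by
        funext j
        rw [Finset.sum_apply]
        simp only [hE, Pi.smul_apply, smul_eq_mul, mul_ite, mul_one, mul_zero]
        rw [Finset.sum_ite_eq' Finset.univ j (fun i => L (wN N) i)]
        simp
      calc (r N).coeff d = wN N ⟨d, hd⟩ := rfl
        _ = g (L (wN N)) ⟨d, hd⟩ := by rw [← h1]
        _ = ∑ i : ι, (L (wN N) i) * g (E i) ⟨d, hd⟩ := by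
            conv_lhs => rw [h2, map_sum]
            rw [Finset.sum_apply]
            refine Finset.sum_congr rfl fun i _ => ?_
            rw [map_smul, Pi.smul_apply, smul_eq_mul]
    have htend : Tendsto (fun N => ∑ i : ι, (L (wN N) i) * g (E i) ⟨d, hd⟩)
        atTop (nhds 0) := by
      have h0 : (0 : C) = ∑ _i : ι, 0 := by simp
      rw [h0]
      refine tendsto_finset_sum _ fun i _ => ?_
      simpa using (hLto i).mul_const (g (E i) ⟨d, hd⟩)
    refine htend.congr fun N => (hrec N).symm
  · have hz : ∀ N, (r N).coeff d = 0 := by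
      intro N
      refine Polynomial.coeff_eq_zero_of_natDegree_lt ?_
      have := hrdeg N
      omega
    have h0 : (fun N : ℕ =>
        ((∏ i ∈ Finset.range (N + 1), (Polynomial.C ((i : C) * c) + X)) %ₘ χ).coeff d)
        = fun _ => (0 : C) := funext hz
    rw [h0]
    exact tendsto_const_nhds

end Aux

/-- over an algebraically closed complete nonarchimedean extension of `ℚ_p`,
for `c` integral and `A` an integral `n×n` matrix, the products
`P_N = ∏_{i=0}^{N} (i·c·I + A)` (in increasing order of `i`) tend to the zero matrix
(entrywise) iff for every eigenvalue `α` of `A` the scalar products `∏_{i=0}^{N} (i·c + α)`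
tend to `0`. -/
theorem stmt11 (p : ℕ) [Fact (Nat.Prime p)] (C : Type*) [NormedField C]
    [IsAlgClosed C] [CompleteSpace C]
    (hult : ∀ x y : C, ‖x + y‖ ≤ max ‖x‖ ‖y‖) (hp : ‖(p : C)‖ < 1)
    (n : ℕ) (c : C) (hc : ‖c‖ ≤ 1) (A : Matrix (Fin n) (Fin n) C)
    (hA : ∀ i j, ‖A i j‖ ≤ 1) :
    (∀ k l : Fin n,
        Filter.Tendsto
          (fun N : ℕ =>
            (((List.range (N + 1)).map
                (fun i : ℕ => ((i : C) * c) • (1 : Matrix (Fin n) (Fin n) C) + A)).prod) k l)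
          Filter.atTop (nhds 0))
      ↔ ∀ α : C, (Matrix.charpoly A).IsRoot α →
          Filter.Tendsto (fun N : ℕ => ∏ i ∈ Finset.range (N + 1), ((i : C) * c + α))
            Filter.atTop (nhds 0) := by
  classical
  have hp0 : 0 < p := (Fact.out : p.Prime).pos
  rcases Nat.eq_zero_or_pos n with hn0 | hn
  · subst hn0
    constructor
    · intro _ α hroot
      exfalso
      have h1 : Matrix.charpoly A = 1 := by
        rw [Matrix.charpoly]
        exact Matrix.det_eq_one_of_card_eq_zero (by simp)
      rw [h1] at hroot
      simpa using hroot
    · intro _ k _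
      exact (Fin.elim0 k)
  set PP : ℕ → Matrix (Fin n) (Fin n) C := fun N =>
    ((List.range (N + 1)).map
      (fun i : ℕ => ((i : C) * c) • (1 : Matrix (Fin n) (Fin n) C) + A)).prod with hPP
  constructor
  · -- forward direction
    intro h α hroot
    obtain ⟨v, hv0, hv⟩ := exists_eigenvector A hroot
    obtain ⟨l1, hl1⟩ := Function.ne_iff.1 hv0
    have hv1 : v l1 ≠ 0 := by simpa using hl1
    have hPmul : ∀ N : ℕ, (PP N).mulVec v
        = (∏ i ∈ Finset.range (N + 1), ((i : C) * c + α)) • v := by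
      intro N
      simp only [hPP]
      rw [listprod_eq_aeval, aeval_mulVec hv]
      congr 1
      rw [eval_prod]
      refine Finset.prod_congr rfl fun i _ => ?_
      simp
    have htend : Tendsto
        (fun N : ℕ => (∏ i ∈ Finset.range (N + 1), ((i : C) * c + α)) * v l1)
        atTop (nhds 0) := by
      have hform : ∀ N : ℕ, (∏ i ∈ Finset.range (N + 1), ((i : C) * c + α)) * v l1
          = ∑ l : Fin n, PP N l1 l * v l := by
        intro N
        have := congrFun (hPmul N) l1
        rw [Matrix.mulVec] at this
        simpa [dotProduct, Pi.smul_apply, smul_eq_mul] using this.symm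
      have hsum : Tendsto (fun N : ℕ => ∑ l : Fin n, PP N l1 l * v l) atTop (nhds 0) := by
        have h0 : (0 : C) = ∑ _l : Fin n, 0 := by simp
        rw [h0]
        exact tendsto_finset_sum _ fun l _ => by simpa using (h l1 l).mul_const (v l)
      exact hsum.congr fun N => (hform N).symm
    have := htend.mul_const (v l1)⁻¹
    simp only [mul_assoc, mul_inv_cancel₀ hv1, mul_one, zero_mul] at this
    exact this
  · -- backward direction
    intro h k l
    set χ : C[X] := Matrix.charpoly A with hχ
    have hmon : χ.Monic := Matrix.charpoly_monic A
    have hχ0 : χ ≠ 0 := hmon.ne_zero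
    have hdeg : χ.natDegree = n := by
      rw [hχ, Matrix.charpoly_natDegree_eq_dim]
      exact Fintype.card_fin n
    have hcard : Multiset.card χ.roots = n := by
      have h1 := Polynomial.splits_iff_card_roots.1 (IsAlgClosed.splits χ)
      rw [h1, hdeg]
    have hroots_le : ∀ a ∈ χ.roots, ‖a‖ ≤ 1 := fun a ha =>
      root_norm_le hult hA (Polynomial.isRoot_of_mem_roots ha)
    have hconv : ∀ a ∈ χ.roots,
        Tendsto (fun N : ℕ => ∏ i ∈ Finset.range (N + 1), ((i : C) * c + a))
          atTop (nhds 0) := fun a ha => h a (Polynomial.isRoot_of_mem_roots ha)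
    have hco := coeff_mod_tendsto_zero hult hp0 hp hn χ hmon hdeg hcard c hc hroots_le hconv
    set q : ℕ → C[X] := fun N => ∏ i ∈ Finset.range (N + 1), (Polynomial.C ((i : C) * c) + X)
      with hq
    have hrdeg : ∀ N, (q N %ₘ χ).natDegree < n := by
      intro N
      by_cases h0 : q N %ₘ χ = 0
      · rw [h0]; simpa using hn
      · have hlt := Polynomial.degree_modByMonic_lt (q N) hmon
        rw [degree_eq_natDegree hχ0, hdeg] at hlt
        exact (natDegree_lt_iff_degree_lt h0).2 (by exact_mod_cast hlt)
    have hPeq : ∀ N : ℕ, PP N k l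
        = ∑ d ∈ Finset.range n, ((q N %ₘ χ).coeff d) * ((A ^ d) k l) := by
      intro N
      simp only [hPP]
      rw [listprod_eq_aeval]
      rw [show Polynomial.aeval A (∏ i ∈ Finset.range (N + 1),
          (Polynomial.C ((i : C) * c) + X)) = Polynomial.aeval A (q N %ₘ χ) from
        Matrix.aeval_eq_aeval_mod_charpoly A (q N)]
      rw [Polynomial.aeval_eq_sum_range' (hrdeg N) A]
      rw [Matrix.sum_apply]
      refine Finset.sum_congr rfl fun d _ => ?_
      rw [Matrix.smul_apply, smul_eq_mul]
    have hsum : Tendsto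
        (fun N : ℕ => ∑ d ∈ Finset.range n, ((q N %ₘ χ).coeff d) * ((A ^ d) k l))
        atTop (nhds 0) := by
      have h0 : (0 : C) = ∑ _d ∈ Finset.range n, 0 := by simp
      rw [h0]
      refine tendsto_finset_sum _ fun d _ => ?_
      have h1 := (hco d).mul_const ((A ^ d) k l)
      rw [zero_mul] at h1
      exact h1
    exact hsum.congr fun N => (hPeq N).symm
end

section
/- Let C be a complete nonarchimedean field of residue characteristic p, let c ∈ O_C with |c| ≤ 1, and let α ∈ O_C such that |i·c + α| < 1 for some nonnegative integer i. Define A_0 = 1 and A_{n+1} = ∏_{j=0}^{n} (j·c + α). Then for every r with max(|i·c+α|, |p|) ≤ r < 1, one has |A_n| ≤ r^{⌊(n-1-i)/p⌋} for all n > i. -/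
lemma stmt15_aux (p d : ℕ) (hp : 0 < p) (hd1 : 0 < d) :
    d / p = (d - 1) / p + if p ∣ d then 1 else 0 := by
  obtain ⟨e, rfl⟩ : ∃ e, d = e + 1 := ⟨d - 1, by omega⟩
  simpa using (Nat.succ_div : (e + 1) / p = _)

/-- with `A_n = ∏_{j=0}^{n-1} (j·c + α)` (so `A_0 = 1`,
`A_{n+1} = ∏_{j=0}^{n} (j·c + α)`), if `‖i·c + α‖ < 1` for some `i`, then for every `r`
with `max(‖i·c + α‖, ‖p‖) ≤ r < 1` one has `‖A_n‖ ≤ r^{⌊(n-1-i)/p⌋}` for all `n > i`. -/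
theorem stmt15 (p : ℕ) [Fact (Nat.Prime p)] (C : Type*) [NormedField C]
    (hult : ∀ x y : C, ‖x + y‖ ≤ max ‖x‖ ‖y‖) (hp : ‖(p : C)‖ < 1)
    (c α : C) (hc : ‖c‖ ≤ 1) (hα : ‖α‖ ≤ 1)
    (i : ℕ) (hi : ‖(i : C) * c + α‖ < 1)
    (r : ℝ) (hr : max ‖(i : C) * c + α‖ ‖(p : C)‖ ≤ r) (hr1 : r < 1) :
    ∀ n : ℕ, i < n →
      ‖∏ j ∈ Finset.range n, ((j : C) * c + α)‖ ≤ r ^ ((n - 1 - i) / p) := by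
  have hr0 : (0:ℝ) ≤ r := le_trans (le_trans (norm_nonneg _) (le_max_left _ _)) hr
  have hppos : 0 < p := (Fact.out : p.Prime).pos
  have hnat : ∀ j : ℕ, ‖(j : C)‖ ≤ 1 := by
    intro j
    induction j with
    | zero => simp
    | succ j ih =>
      push_cast
      refine le_trans (hult _ _) ?_
      simp [ih]
  have hfac : ∀ j : ℕ, ‖(j : C) * c + α‖ ≤ 1 := by
    intro j
    refine le_trans (hult _ _) (max_le ?_ hα)
    rw [norm_mul]
    exact mul_le_one₀ (hnat j) (norm_nonneg c) hc
  have hfacr : ∀ n : ℕ, i ≤ n → p ∣ n - i → ‖(n : C) * c + α‖ ≤ r := by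
    intro n hn hd
    obtain ⟨k, hk⟩ := hd
    have hn' : n = i + p * k := by omega
    subst hn'
    have heq : ((i + p * k : ℕ) : C) * c + α = ((i : C) * c + α) + ((p : C) * (k : C)) * c := by
      push_cast; ring
    rw [heq]
    refine le_trans (hult _ _) (max_le (le_trans (le_max_left _ _) hr) ?_)
    rw [norm_mul, norm_mul]
    calc ‖(p : C)‖ * ‖(k : C)‖ * ‖c‖ ≤ ‖(p : C)‖ * 1 * 1 :=
          mul_le_mul (mul_le_mul_of_nonneg_left (hnat k) (norm_nonneg _)) hc
            (norm_nonneg _) (by positivity)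
      _ = ‖(p : C)‖ := by ring
      _ ≤ r := le_trans (le_max_right _ _) hr
  intro n hn
  induction n with
  | zero => omega
  | succ n ih =>
    rcases Nat.lt_or_ge i n with h | h
    · rw [Finset.prod_range_succ, norm_mul]
      have hexp : (n + 1 - 1 - i) / p
          = (n - 1 - i) / p + if p ∣ n - i then 1 else 0 := by
        have h1 : n + 1 - 1 - i = n - i := by omega
        rw [h1, stmt15_aux p (n - i) hppos (by omega)]
        have h2 : n - i - 1 = n - 1 - i := by omega
        rw [h2]
      rw [hexp]
      by_cases hd : p ∣ n - i
      · simp only [hd, if_true, pow_succ]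
        exact mul_le_mul (ih h) (hfacr n h.le hd) (norm_nonneg _) (pow_nonneg hr0 _)
      · simp only [hd, if_false, add_zero]
        calc ‖∏ j ∈ Finset.range n, ((j : C) * c + α)‖ * ‖(n : C) * c + α‖
            ≤ r ^ ((n - 1 - i) / p) * 1 :=
              mul_le_mul (ih h) (hfac n) (norm_nonneg _) (pow_nonneg hr0 _)
          _ = r ^ ((n - 1 - i) / p) := mul_one _
    · have hni : n = i := by omega
      subst hni
      have : (n + 1 - 1 - n) / p = 0 := by simp
      rw [this, pow_zero]
      calc ‖∏ j ∈ Finset.range (n + 1), ((j : C) * c + α)‖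
          = ∏ j ∈ Finset.range (n + 1), ‖(j : C) * c + α‖ := by
            rw [norm_prod]
        _ ≤ 1 := Finset.prod_le_one (fun j _ => norm_nonneg _) (fun j _ => hfac j)
end
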